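/- Let x ∈ [0,1]^n and for each B ⊆ [n] let p(B) = ∏_{i∈B} x_i · ∏_{j∉B}(1−x_j). Suppose that for each B ⊆ [n] there is a probability distribution q_B on the subsets of B (q_B(A) ≥ 0 and Σ_{A⊆B} q_B(A) = 1), and let β ∈ [0,1], such that: (Marginal property) for every i ∈ [n], Σ_{B⊆[n]} p(B) Σ_{A⊆B : i∈A} q_B(A) ≥ β · Σ_{B⊆[n] : i∈B} p(B); and (Monotonicity) for all B ⊆ B' ⊆ [n] and every i ∈ B, Σ_{A⊆B : i∈A} q_B(A) ≥ Σ_{A'⊆B' : i∈A'} q_{B'}(A'). Then for every monotone submodular function f : 2^{[n]} → ℝ_{≥0}: Σ_{B⊆[n]} p(B) Σ_{A⊆B} q_B(A) f(A) ≥ β · Σ_{B⊆[n]} p(B) f(B). -/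

import Mathlib

/-!
Order the ground set and write `f B = f ∅ + ∑ i ∈ B, gᵢ B`, where `gᵢ B` is the marginal gain of
`i` over the elements of `B` preceding it. By submodularity `gᵢ` is decreasing in `B`, so for
`A ⊆ B` the gains `gᵢ B`, `i ∈ A`, still sum to at most `f A - f ∅`; hence the expected value of
`f A` given `B` is at least `f ∅ + ∑ i ∈ B, cᵢ B * gᵢ B`, with `cᵢ B` the probability that `i` is
retained. Conditioned on `i ∈ B` the product measure is again a product measure, and `cᵢ`, `gᵢ`
are both decreasing there, so the FKG inequality gives
`E[cᵢ gᵢ | i ∈ B] ≥ E[cᵢ | i ∈ B] E[gᵢ | i ∈ B] ≥ β E[gᵢ | i ∈ B]`. Summing over `i`, together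
with `β f ∅ ≤ f ∅`, gives the claim.
-/

open Finset
open scoped Classical BigOperators

/-- Probability of the subset `B` under the product distribution on subsets of
`Fin n` with marginal probabilities `x`. -/
noncomputable def prodP {n : ℕ} (x : Fin n → ℝ) (B : Finset (Fin n)) : ℝ :=
  (∏ i ∈ B, x i) * ∏ i ∈ Bᶜ, (1 - x i)

theorem fkg_antitone {α β : Type*} [DistribLattice α] [Fintype α] [CommSemiring β]
    [LinearOrder β] [IsStrictOrderedRing β] [ExistsAddOfLE β] {f g μ : α → β}
    (hμ₀ : 0 ≤ μ) (hf₀ : 0 ≤ f) (hg₀ : 0 ≤ g) (hf : Antitone f) (hg : Antitone g)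
    (hμ : ∀ a b, μ a * μ b ≤ μ (a ⊓ b) * μ (a ⊔ b)) :
    (∑ a, μ a * f a) * ∑ a, μ a * g a ≤ (∑ a, μ a) * ∑ a, μ a * (f a * g a) :=
  fkg (α := αᵒᵈ) f g μ hμ₀ hf₀ hg₀ hf.dual_left hg.dual_left fun a b =>
    (hμ (OrderDual.ofDual a) (OrderDual.ofDual b)).trans_eq (mul_comm _ _)

theorem Finset.sum_filter_notMem_insert {α M : Type*} [Fintype α] [DecidableEq α]
    [AddCommMonoid M] (i : α) (F : Finset α → M) :
    ∑ B with i ∉ B, F (insert i B) = ∑ B with i ∈ B, F B :=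
  sum_nbij' (insert i) (·.erase i) (by simp) (by simp) (by simp +contextual)
    (by simp +contextual) (by simp)

section SetFunction

variable {α : Type*} [LinearOrder α] (f : Finset α → ℝ)

def prefixGain (i : α) (B : Finset α) : ℝ :=
  f (insert i (B.filter (· < i))) - f (B.filter (· < i))

theorem add_sum_prefixGain (A : Finset α) : f ∅ + ∑ i ∈ A, prefixGain f i A = f A := by
  induction A using Finset.induction_on_max with
  | empty => simp
  | insert a A ha ih =>
    have hlt : (insert a A).filter (· < a) = A := by
      rw [filter_insert, if_neg (lt_irrefl a), filter_true_of_mem ha]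
    have hA : ∀ i ∈ A, prefixGain f i (insert a A) = prefixGain f i A := by
      intro i hi
      have : (insert a A).filter (· < i) = A.filter (· < i) := by
        rw [filter_insert, if_neg (not_lt.2 (ha i hi).le)]
      rw [prefixGain, prefixGain, this]
    have haA : a ∉ A := fun h => lt_irrefl a (ha a h)
    rw [sum_insert haA, sum_congr rfl hA, prefixGain, hlt]
    linarith

theorem sub_le_sub_of_submodular
    (hsub : ∀ A B : Finset α, f (A ∪ B) + f (A ∩ B) ≤ f A + f B)
    {T T' : Finset α} (hT : T ⊆ T') {i : α} (hi : i ∉ T') :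
    f (insert i T') - f T' ≤ f (insert i T) - f T := by
  have hunion : insert i T ∪ T' = insert i T' := by rw [insert_union, union_eq_right.2 hT]
  have hinter : insert i T ∩ T' = T := by
    rw [insert_inter_of_notMem hi, inter_eq_left.2 hT]
  have := hsub (insert i T) T'
  rw [hunion, hinter] at this
  linarith

theorem prefixGain_nonneg (hmono : ∀ A B : Finset α, A ⊆ B → f A ≤ f B) (i : α)
    (B : Finset α) : 0 ≤ prefixGain f i B :=
  sub_nonneg.2 (hmono _ _ (subset_insert _ _))

theorem prefixGain_anti (hsub : ∀ A B : Finset α, f (A ∪ B) + f (A ∩ B) ≤ f A + f B)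
    (i : α) {A B : Finset α} (hAB : A ⊆ B) : prefixGain f i B ≤ prefixGain f i A :=
  sub_le_sub_of_submodular f hsub (filter_subset_filter _ hAB) (by simp)

theorem add_sum_prefixGain_le (hsub : ∀ A B : Finset α, f (A ∪ B) + f (A ∩ B) ≤ f A + f B)
    {A B : Finset α} (hAB : A ⊆ B) : f ∅ + ∑ i ∈ A, prefixGain f i B ≤ f A := by
  calc f ∅ + ∑ i ∈ A, prefixGain f i B
      ≤ f ∅ + ∑ i ∈ A, prefixGain f i A := by
        gcongr with i; exact prefixGain_anti f hsub i hAB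
    _ = f A := add_sum_prefixGain f A

theorem add_sum_mul_prefixGain_le (hsub : ∀ A B : Finset α, f (A ∪ B) + f (A ∩ B) ≤ f A + f B)
    (B : Finset α) {q : Finset α → ℝ} (hq0 : ∀ A, 0 ≤ q A) (hq1 : ∑ A ∈ B.powerset, q A = 1) :
    f ∅ + ∑ i ∈ B, (∑ A ∈ B.powerset with i ∈ A, q A) * prefixGain f i B
      ≤ ∑ A ∈ B.powerset, q A * f A := by
  have hswap : ∑ i ∈ B, (∑ A ∈ B.powerset with i ∈ A, q A) * prefixGain f i B
      = ∑ A ∈ B.powerset, q A * ∑ i ∈ A, prefixGain f i B := by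
    simp_rw [sum_mul, mul_sum]
    exact sum_comm' fun i A => by
      simp only [mem_filter, mem_powerset]
      exact ⟨fun ⟨_, hA, hiA⟩ => ⟨hiA, hA⟩, fun ⟨hiA, hA⟩ => ⟨hA hiA, hA, hiA⟩⟩
  calc f ∅ + ∑ i ∈ B, (∑ A ∈ B.powerset with i ∈ A, q A) * prefixGain f i B
      = ∑ A ∈ B.powerset, q A * (f ∅ + ∑ i ∈ A, prefixGain f i B) := by
        simp only [mul_add, sum_add_distrib, ← sum_mul, hq1, one_mul, hswap]
    _ ≤ ∑ A ∈ B.powerset, q A * f A := by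
        gcongr with A hA
        · exact hq0 A
        · exact add_sum_prefixGain_le f hsub (mem_powerset.1 hA)

end SetFunction

section ProductMeasure

variable {n : ℕ} (x : Fin n → ℝ)

theorem prodP_nonneg (hx : ∀ i, x i ∈ Set.Icc (0 : ℝ) 1) (B : Finset (Fin n)) :
    0 ≤ prodP x B :=
  mul_nonneg (prod_nonneg fun i _ => (hx i).1) (prod_nonneg fun i _ => sub_nonneg.2 (hx i).2)

theorem sum_prodP : ∑ B, prodP x B = 1 := by
  have := prod_add x (fun i => 1 - x i) univ
  simp only [add_sub_cancel, prod_const_one, powerset_univ, ← compl_eq_univ_sdiff] at this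
  exact this.symm

theorem prodP_mul_prodP (A B : Finset (Fin n)) :
    prodP x A * prodP x B = prodP x (A ∩ B) * prodP x (A ∪ B) := by
  simp only [prodP, compl_inter, compl_union]
  linear_combination (∏ i ∈ Aᶜ, (1 - x i)) * (∏ i ∈ Bᶜ, (1 - x i)) *
      (prod_union_inter (s₁ := A) (s₂ := B) (f := x)).symm +
    (∏ i ∈ A ∪ B, x i) * (∏ i ∈ A ∩ B, x i) *
      (prod_union_inter (s₁ := Aᶜ) (s₂ := Bᶜ) (f := fun i => 1 - x i)).symm

theorem mul_prodP_of_notMem {i : Fin n} {B : Finset (Fin n)} (hi : i ∉ B) :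
    x i * prodP x B = (1 - x i) * prodP x (insert i B) := by
  have hc : Bᶜ = insert i (insert i B)ᶜ := by simp [compl_insert, insert_erase, hi]
  rw [prodP, prodP, prod_insert hi, hc, prod_insert (by simp)]
  ring

theorem sum_filter_mem_prodP_mul (i : Fin n) (h : Finset (Fin n) → ℝ) :
    ∑ B with i ∈ B, prodP x B * h B = x i * ∑ B, prodP x B * h (insert i B) := by
  have hin : ∑ B with i ∈ B, prodP x B * h (insert i B) = ∑ B with i ∈ B, prodP x B * h B :=
    sum_congr rfl fun B hB => by rw [insert_eq_of_mem (mem_filter.1 hB).2]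
  have hout : x i * ∑ B with i ∉ B, prodP x B * h (insert i B)
      = (1 - x i) * ∑ B with i ∈ B, prodP x B * h B := by
    rw [mul_sum, mul_sum, ← sum_filter_notMem_insert i (fun B => (1 - x i) * (prodP x B * h B))]
    refine sum_congr rfl fun B hB => ?_
    rw [← mul_assoc, mul_prodP_of_notMem x (mem_filter.1 hB).2, mul_assoc]
  rw [← sum_filter_add_sum_filter_not univ (i ∈ ·), mul_add, hin, hout]
  ring

theorem sum_prodP_mul_mul_sum_le (hx : ∀ i, x i ∈ Set.Icc (0 : ℝ) 1)
    {φ ψ : Finset (Fin n) → ℝ} (hφ₀ : 0 ≤ φ) (hψ₀ : 0 ≤ ψ) (hφ : Antitone φ) (hψ : Antitone ψ) :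
    (∑ B, prodP x B * φ B) * ∑ B, prodP x B * ψ B ≤ ∑ B, prodP x B * (φ B * ψ B) := by
  simpa only [sum_prodP, one_mul] using
    fkg_antitone (prodP_nonneg x hx) hφ₀ hψ₀ hφ hψ fun A B => (prodP_mul_prodP x A B).le

theorem mul_sum_filter_mem_prodP_le (hx : ∀ i, x i ∈ Set.Icc (0 : ℝ) 1) (i : Fin n)
    {β : ℝ} {c g : Finset (Fin n) → ℝ} (hc₀ : 0 ≤ c) (hg₀ : 0 ≤ g)
    (hc : ∀ A B, i ∈ A → A ⊆ B → c B ≤ c A) (hg : ∀ A B, i ∈ A → A ⊆ B → g B ≤ g A)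
    (hcβ : β * ∑ B with i ∈ B, prodP x B ≤ ∑ B with i ∈ B, prodP x B * c B) :
    β * ∑ B with i ∈ B, prodP x B * g B ≤ ∑ B with i ∈ B, prodP x B * (c B * g B) := by
  have hprob : ∑ B with i ∈ B, prodP x B = x i := by
    simpa only [mul_one, sum_prodP] using sum_filter_mem_prodP_mul x i fun _ => 1
  rw [hprob, sum_filter_mem_prodP_mul x i c] at hcβ
  rw [sum_filter_mem_prodP_mul x i g, sum_filter_mem_prodP_mul x i fun B => c B * g B]
  have hcorr := sum_prodP_mul_mul_sum_le x hx (φ := fun B => c (insert i B))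
    (ψ := fun B => g (insert i B)) (fun B => hc₀ (insert i B)) (fun B => hg₀ (insert i B))
    (fun A B hAB => hc _ _ (mem_insert_self i A) (insert_subset_insert i hAB))
    (fun A B hAB => hg _ _ (mem_insert_self i A) (insert_subset_insert i hAB))
  have hψ₀ : 0 ≤ ∑ B, prodP x B * g (insert i B) :=
    sum_nonneg fun B _ => mul_nonneg (prodP_nonneg x hx B) (hg₀ (insert i B))
  calc β * (x i * ∑ B, prodP x B * g (insert i B))
      = (β * x i) * ∑ B, prodP x B * g (insert i B) := by ring
    _ ≤ (x i * ∑ B, prodP x B * c (insert i B)) * ∑ B, prodP x B * g (insert i B) :=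
        mul_le_mul_of_nonneg_right hcβ hψ₀
    _ = x i * ((∑ B, prodP x B * c (insert i B)) * ∑ B, prodP x B * g (insert i B)) := by ring
    _ ≤ x i * ∑ B, prodP x B * (c (insert i B) * g (insert i B)) :=
        mul_le_mul_of_nonneg_left hcorr (hx i).1

theorem sum_prodP_mul_add_sum (a : ℝ) (F : Fin n → Finset (Fin n) → ℝ) :
    ∑ B, prodP x B * (a + ∑ i ∈ B, F i B) = a + ∑ i, ∑ B with i ∈ B, prodP x B * F i B := by
  simp only [mul_add, sum_add_distrib, ← sum_mul, sum_prodP, one_mul, mul_sum]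
  congr 1
  exact sum_comm' fun B i => by simp

end ProductMeasure

theorem generalized_fractional_subadditivity_general (n : ℕ)
    (x : Fin n → ℝ) (hx : ∀ i, x i ∈ Set.Icc (0:ℝ) 1)
    (q : Finset (Fin n) → Finset (Fin n) → ℝ)
    (hq0 : ∀ B A : Finset (Fin n), 0 ≤ q B A)
    (hq1 : ∀ B : Finset (Fin n), ∑ A ∈ B.powerset, q B A = 1)
    (β : ℝ) (hβ : β ∈ Set.Icc (0:ℝ) 1)
    (hmarg : ∀ i : Fin n,
      ∑ B : Finset (Fin n), prodP x B * ∑ A ∈ B.powerset.filter (fun A => i ∈ A), q B A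
        ≥ β * ∑ B ∈ univ.filter (fun B : Finset (Fin n) => i ∈ B), prodP x B)
    (hmonot : ∀ B B' : Finset (Fin n), B ⊆ B' → ∀ i ∈ B,
      ∑ A ∈ B.powerset.filter (fun A => i ∈ A), q B A
        ≥ ∑ A ∈ B'.powerset.filter (fun A => i ∈ A), q B' A)
    (f : Finset (Fin n) → ℝ)
    (hmono : ∀ A B : Finset (Fin n), A ⊆ B → f A ≤ f B)
    (hsub : ∀ A B : Finset (Fin n), f (A ∪ B) + f (A ∩ B) ≤ f A + f B)
    (hnn : ∀ A : Finset (Fin n), 0 ≤ f A) :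
    ∑ B : Finset (Fin n), prodP x B * ∑ A ∈ B.powerset, q B A * f A
      ≥ β * ∑ B : Finset (Fin n), prodP x B * f B := by
  set c : Fin n → Finset (Fin n) → ℝ := fun i B => ∑ A ∈ B.powerset with i ∈ A, q B A
  have hc₀ : ∀ i, 0 ≤ c i := fun i B => sum_nonneg fun A _ => hq0 B A
  have hc_of_notMem : ∀ i B, i ∉ B → c i B = 0 := fun i B hiB =>
    sum_eq_zero fun A hA => absurd (mem_powerset.1 (mem_filter.1 hA).1 (mem_filter.1 hA).2) hiB
  have hcoord : ∀ i, β * ∑ B with i ∈ B, prodP x B * prefixGain f i B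
      ≤ ∑ B with i ∈ B, prodP x B * (c i B * prefixGain f i B) := by
    refine fun i => mul_sum_filter_mem_prodP_le x hx i (hc₀ i) (prefixGain_nonneg f hmono i)
      (fun A B hiA hAB => hmonot A B hAB i hiA) (fun A B _ hAB => prefixGain_anti f hsub i hAB) ?_
    refine (hmarg i).trans_eq (sum_filter_of_ne fun B _ hB => ?_).symm
    exact not_not.1 fun hiB => hB (mul_eq_zero_of_right _ (hc_of_notMem i B hiB))
  have hexpand :
      ∑ B, prodP x B * f B = f ∅ + ∑ i, ∑ B with i ∈ B, prodP x B * prefixGain f i B := by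
    rw [← sum_prodP_mul_add_sum]
    simp only [add_sum_prefixGain]
  calc β * ∑ B, prodP x B * f B
      = β * f ∅ + ∑ i, β * ∑ B with i ∈ B, prodP x B * prefixGain f i B := by
        rw [hexpand, mul_add, mul_sum]
    _ ≤ f ∅ + ∑ i, ∑ B with i ∈ B, prodP x B * (c i B * prefixGain f i B) :=
        add_le_add (mul_le_of_le_one_left (hnn ∅) hβ.2) (sum_le_sum fun i _ => hcoord i)
    _ = ∑ B, prodP x B * (f ∅ + ∑ i ∈ B, c i B * prefixGain f i B) :=
        (sum_prodP_mul_add_sum x _ _).symm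
    _ ≤ ∑ B, prodP x B * ∑ A ∈ B.powerset, q B A * f A :=
        sum_le_sum fun B _ => mul_le_mul_of_nonneg_left
          (add_sum_mul_prefixGain_le f hsub B (hq0 B) (hq1 B)) (prodP_nonneg x hx B)

/-- generalized fractional subadditivity: choose `B ⊆ [n]` from
a product distribution with marginals `x`, then retain `A ⊆ B` with probability
`q B A`.  If the retention scheme satisfies the Marginal property (each item is
retained, given that it is sampled, with probability at least `β`) and the
Monotonicity property, then for every nonnegative monotone submodular `f`,
`E[f(A)] ≥ β · E[f(B)]`. -/
theorem generalized_fractional_subadditivity (n : ℕ)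
    (x : Fin n → ℝ) (hx : ∀ i, x i ∈ Set.Icc (0:ℝ) 1)
    (q : Finset (Fin n) → Finset (Fin n) → ℝ)
    (hq0 : ∀ B A : Finset (Fin n), 0 ≤ q B A)
    (hqsupp : ∀ B A : Finset (Fin n), ¬ A ⊆ B → q B A = 0)
    (hq1 : ∀ B : Finset (Fin n), ∑ A ∈ B.powerset, q B A = 1)
    (β : ℝ) (hβ : β ∈ Set.Icc (0:ℝ) 1)
    (hmarg : ∀ i : Fin n,
      ∑ B : Finset (Fin n), prodP x B * ∑ A ∈ B.powerset.filter (fun A => i ∈ A), q B A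
        ≥ β * ∑ B ∈ univ.filter (fun B : Finset (Fin n) => i ∈ B), prodP x B)
    (hmonot : ∀ B B' : Finset (Fin n), B ⊆ B' → ∀ i ∈ B,
      ∑ A ∈ B.powerset.filter (fun A => i ∈ A), q B A
        ≥ ∑ A ∈ B'.powerset.filter (fun A => i ∈ A), q B' A)
    (f : Finset (Fin n) → ℝ)
    (hmono : ∀ A B : Finset (Fin n), A ⊆ B → f A ≤ f B)
    (hsub : ∀ A B : Finset (Fin n), f (A ∪ B) + f (A ∩ B) ≤ f A + f B)
    (hnn : ∀ A : Finset (Fin n), 0 ≤ f A) :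
    ∑ B : Finset (Fin n), prodP x B * ∑ A ∈ B.powerset, q B A * f A
      ≥ β * ∑ B : Finset (Fin n), prodP x B * f B :=
  generalized_fractional_subadditivity_general n x hx q hq0 hq1 β hβ hmarg hmonot f hmono hsub hnn
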